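/- arXiv:1506.05051 — 5 statements merged into one kernel-verified Lean document; each statement's English description precedes it below -/
import Mathlib

section
/- If G is a simple oriented hypergraph and k a non-negative integer, then the (i,j)-entry of A_G^k equals w^±(v_i,v_j;k) = w^+(v_i,v_j;k) - w^-(v_i,v_j;k), the number of positive vertex-walks of length k from v_i to v_j minus the number of negative ones. -/
open Matrix

/-- A simple oriented hypergraph: each vertex-edge pair is incident at most once,
`σ v e` is the sign (±1) of the incidence `(v,e)`, and `σ v e = 0` when `v` and
`e` are not incident. -/
structure SOHG (V E : Type) where
  σ : V → E → ℤ
  σ_mem : ∀ v e, σ v e = 1 ∨ σ v e = -1 ∨ σ v e = 0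

variable {V E : Type} [Fintype V] [Fintype E] [DecidableEq V] [DecidableEq E]

/-- The adjacency matrix: `a_ij = ∑_e sgn_e(v_i,v_j)` where
`sgn_e(v,w) = -σ(v,e)σ(w,e)` (which is `0` unless both are incident to `e`);
a simple oriented hypergraph has no self-adjacencies, so the diagonal is `0`. -/
def SOHG.adj (G : SOHG V E) : Matrix V V ℤ :=
  Matrix.of fun i j => if i = j then 0 else ∑ e, -(G.σ i e * G.σ j e)

/-- The degree of a vertex: the number of incidences (= incident edges) containing it. -/
def SOHG.deg (G : SOHG V E) (v : V) : ℕ :=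
  (Finset.univ.filter fun e => G.σ v e ≠ 0).card

/-- The degree matrix. -/
def SOHG.degMatrix (G : SOHG V E) : Matrix V V ℤ :=
  Matrix.diagonal fun v => (G.deg v : ℤ)

/-- The Laplacian matrix `L_G = D_G - A_G`. -/
def SOHG.lap (G : SOHG V E) : Matrix V V ℤ := G.degMatrix - G.adj

/-- The incidence matrix: the `(v,e)`-entry is `σ(v,e)` (which is `0` when `v`
and `e` are not incident). -/
def SOHG.H (G : SOHG V E) : Matrix V E ℤ := Matrix.of fun v e => G.σ v e

/-- `w^±(i,j;k)`: the signed count (positive minus negative) of vertex-walks of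
length `k` from `i` to `j`.  A walk is given by a vertex sequence `vs` and an
edge sequence `es` such that consecutive vertices are incident to the common
edge via distinct incidences; its sign is the product of the signs
`-σ(v,e)σ(w,e)` of its adjacencies, which equals `(-1)^⌊n/2⌋ ∏ σ(i_h)` over its
incidences. -/
def SOHG.wpm (G : SOHG V E) (i j : V) (k : ℕ) : ℤ :=
  ∑ vs : Fin (k + 1) → V, ∑ es : Fin k → E,
    if vs 0 = i ∧ vs (Fin.last k) = j ∧
        ∀ h : Fin k, G.σ (vs h.castSucc) (es h) ≠ 0 ∧
          G.σ (vs h.succ) (es h) ≠ 0 ∧ vs h.castSucc ≠ vs h.succ then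
      ∏ h : Fin k, -(G.σ (vs h.castSucc) (es h) * G.σ (vs h.succ) (es h))
    else 0

def pathSum (A : Matrix V V ℤ) (k : ℕ) (i j : V) : ℤ :=
  ∑ vs : Fin (k + 1) → V,
    if vs 0 = i ∧ vs (Fin.last k) = j then
      ∏ h : Fin k, A (vs h.castSucc) (vs h.succ)
    else 0

lemma pow_apply_eq_pathSum (A : Matrix V V ℤ) (k : ℕ) (i j : V) :
    (A ^ k) i j = pathSum A k i j := by
  induction k generalizing i j with
  | zero =>
      simp only [pow_zero, pathSum, Fin.prod_univ_zero]
      rw [Fintype.sum_equiv (Equiv.funUnique (Fin 1) V)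
        _ (fun x => if x = i ∧ x = j then (1:ℤ) else 0)
        (fun vs => by
          have h1 : (Fin.last 0) = 0 := rfl
          simp [Equiv.funUnique, h1, Fin.default_eq_zero])]
      simp only [ite_and]
      rw [Finset.sum_ite_eq']
      simp [Matrix.one_apply]
  | succ k ih =>
      rw [pow_succ', Matrix.mul_apply]
      simp only [ih, pathSum]
      rw [← (Fin.consEquiv (fun _ : Fin (k+2) => V)).sum_comp, Fintype.sum_prod_type]
      simp only [Finset.mul_sum]
      rw [Finset.sum_comm]
      conv_rhs => rw [Finset.sum_comm]
      refine Finset.sum_congr rfl fun vs _ => ?_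
      simp only [Fin.consEquiv_apply, Fin.cons_zero, Fin.succ_last, Fin.cons_succ,
        Fin.prod_univ_succ, Fin.cons_zero, mul_ite, mul_zero, ite_and]
      rw [Finset.sum_ite_eq, Finset.sum_ite_eq']
      simp only [Finset.mem_univ, if_true]
      simp only [← Fin.succ_last, ← Fin.succ_castSucc, Fin.cons_succ,
        Fin.castSucc_zero, Fin.cons_zero]

set_option linter.unusedSectionVars false in
lemma adj_eq_sum_ite (G : SOHG V E) (v w : V) :
    ∑ e, (if G.σ v e ≠ 0 ∧ G.σ w e ≠ 0 ∧ v ≠ w then -(G.σ v e * G.σ w e) else 0)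
      = G.adj v w := by
  unfold SOHG.adj
  simp only [Matrix.of_apply]
  by_cases hvw : v = w
  · simp [hvw]
  · rw [if_neg hvw]
    refine Finset.sum_congr rfl fun e _ => ?_
    by_cases h1 : G.σ v e = 0
    · simp [h1]
    by_cases h2 : G.σ w e = 0
    · simp [h2]
    rw [if_pos ⟨h1, h2, hvw⟩]

lemma wpm_eq_pathSum (G : SOHG V E) (i j : V) (k : ℕ) :
    G.wpm i j k = pathSum G.adj k i j := by
  unfold SOHG.wpm pathSum
  refine Finset.sum_congr rfl fun vs _ => ?_
  by_cases hP : vs 0 = i ∧ vs (Fin.last k) = j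
  · rw [if_pos hP]
    obtain ⟨h1, h2⟩ := hP
    have step : ∀ es : Fin k → E,
        (if vs 0 = i ∧ vs (Fin.last k) = j ∧
            ∀ h : Fin k, G.σ (vs h.castSucc) (es h) ≠ 0 ∧
              G.σ (vs h.succ) (es h) ≠ 0 ∧ vs h.castSucc ≠ vs h.succ then
          ∏ h : Fin k, -(G.σ (vs h.castSucc) (es h) * G.σ (vs h.succ) (es h))
        else 0)
        = ∏ h : Fin k,
            (if G.σ (vs h.castSucc) (es h) ≠ 0 ∧ G.σ (vs h.succ) (es h) ≠ 0 ∧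
                vs h.castSucc ≠ vs h.succ then
              -(G.σ (vs h.castSucc) (es h) * G.σ (vs h.succ) (es h)) else 0) := by
      intro es
      by_cases hC : ∀ h : Fin k, G.σ (vs h.castSucc) (es h) ≠ 0 ∧
          G.σ (vs h.succ) (es h) ≠ 0 ∧ vs h.castSucc ≠ vs h.succ
      · rw [if_pos ⟨h1, h2, hC⟩]
        exact Finset.prod_congr rfl fun h _ => (if_pos (hC h)).symm
      · rw [if_neg fun hc => hC hc.2.2]
        obtain ⟨h, hh⟩ := not_forall.mp hC
        exact (Finset.prod_eq_zero (Finset.mem_univ h) (if_neg hh : _ = (0:ℤ))).symm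
    simp only [step]
    refine Eq.trans (Fintype.prod_sum (fun (h : Fin k) (e : E) =>
      if G.σ (vs h.castSucc) e ≠ 0 ∧ G.σ (vs h.succ) e ≠ 0 ∧
          vs h.castSucc ≠ vs h.succ then
        -(G.σ (vs h.castSucc) e * G.σ (vs h.succ) e) else 0)).symm ?_
    exact Finset.prod_congr rfl fun h _ => adj_eq_sum_ite G _ _
  · rw [if_neg hP]
    refine Finset.sum_eq_zero fun es _ => ?_
    rw [if_neg fun hc => hP ⟨hc.1, hc.2.1⟩]


/-- If `G` is a simple oriented hypergraph and `k` a non-negative integer, then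
the `(i,j)`-entry of `A_G^k` is `w^±(vᵢ,vⱼ;k)`. -/
theorem adj_pow_eq_signed_walk_count (G : SOHG V E) (k : ℕ) (i j : V) :
    (G.adj ^ k) i j = G.wpm i j k := by
  rw [wpm_eq_pathSum, pow_apply_eq_pathSum]
end

section
/- Let G be a simple oriented hypergraph and θ a vertex-switching function. Then the Laplacian of the switched hypergraph satisfies L_{G^θ} = D(θ)^T · L_G · D(θ). -/
open Matrix

variable {V E : Type} [Fintype V] [Fintype E] [DecidableEq V] [DecidableEq E]

/-- Vertex-switching: replace `σ(v,e)` by `θ(v)σ(v,e)` for a switching function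
`θ : V → {+1,-1}`. -/
def SOHG.switch (G : SOHG V E) (θ : V → ℤ) (hθ : ∀ v, θ v = 1 ∨ θ v = -1) :
    SOHG V E :=
  ⟨fun v e => θ v * G.σ v e, by
    intro v e
    rcases hθ v with h | h <;> rcases G.σ_mem v e with h' | h' | h' <;>
      simp [h, h']⟩

/- Switching multiplies row `v` of the incidence matrix by the unit `θ v`; this leaves the
degrees unchanged and conjugates the adjacency matrix by `D(θ)`, while `D(θ)` commutes with
the diagonal degree matrix and squares to the identity. -/

theorem Matrix.diagonal_mul_diagonal_mul_diagonal_of_mul_self_eq_one {n R : Type*}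
    [Fintype n] [DecidableEq n] [CommRing R] {θ : n → R} (hθ : ∀ i, θ i * θ i = 1)
    (d : n → R) :
    diagonal θ * diagonal d * diagonal θ = diagonal d := by
  rw [diagonal_mul_diagonal, diagonal_mul_diagonal]
  congr 1
  funext i
  rw [mul_right_comm, hθ, one_mul]

namespace SOHG

theorem deg_switch {V E : Type} [Fintype E] (G : SOHG V E) (θ : V → ℤ)
    (hθ : ∀ v, θ v = 1 ∨ θ v = -1) : (G.switch θ hθ).deg = G.deg := by
  have hθ0 : ∀ v, θ v ≠ 0 := fun v => by rcases hθ v with h | h <;> simp [h]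
  funext v
  simp only [deg, switch, mul_ne_zero_iff, hθ0, ne_eq, not_false_eq_true, true_and]

theorem adj_switch {V E : Type} [Fintype V] [Fintype E] [DecidableEq V] (G : SOHG V E)
    (θ : V → ℤ) (hθ : ∀ v, θ v = 1 ∨ θ v = -1) :
    (G.switch θ hθ).adj = diagonal θ * G.adj * diagonal θ := by
  ext i j
  rw [mul_diagonal, diagonal_mul]
  by_cases hij : i = j
  · simp [adj, hij]
  · simp only [adj, switch, of_apply, if_neg hij, Finset.mul_sum, Finset.sum_mul]
    exact Finset.sum_congr rfl fun e _ => by ring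

end SOHG

/-- If `θ` is a vertex-switching function on `G`, then
`L_{G^θ} = D(θ)ᵀ · L_G · D(θ)`. -/
theorem lap_switch (G : SOHG V E) (θ : V → ℤ) (hθ : ∀ v, θ v = 1 ∨ θ v = -1) :
    (G.switch θ hθ).lap = (Matrix.diagonal θ)ᵀ * G.lap * Matrix.diagonal θ := by
  rw [diagonal_transpose, SOHG.lap, SOHG.lap, mul_sub, sub_mul, SOHG.adj_switch,
    SOHG.degMatrix, SOHG.degMatrix, SOHG.deg_switch,
    diagonal_mul_diagonal_mul_diagonal_of_mul_self_eq_one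
      fun v => by rcases hθ v with h | h <;> simp [h]]
end

section
/- Let Σ = (Γ, sgn) be a simple signed graph and G = (Σ,τ) an oriented signed graph. Then the adjacency matrix of the line graph (Λ(Γ), τ_Λ) equals the adjacency matrix of the incidence dual G*: A_{(Λ(Γ),τ_Λ)} = A_{G*}. -/
open Matrix

variable {V E : Type} [Fintype V] [Fintype E] [DecidableEq V] [DecidableEq E]

/-- The incidence dual of a simple oriented hypergraph: the roles of vertices
and edges are reversed, with `σ*(e,v) = σ(v,e)`. -/
def SOHG.dual (G : SOHG V E) : SOHG E V :=
  ⟨fun e v => G.σ v e, fun e v => G.σ_mem v e⟩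

/-- `G` is `2`-uniform: every edge has exactly two (distinct) incident vertices;
together with simplicity this says `G` is an oriented signed graph with
orientation `τ = σ`. -/
def SOHG.TwoUniform (G : SOHG V E) : Prop :=
  ∀ e : E, (Finset.univ.filter fun v => G.σ v e ≠ 0).card = 2

/-- The underlying graph is simple: two distinct edges share at most one vertex. -/
def SOHG.SimpleGraph' (G : SOHG V E) : Prop :=
  ∀ e f : E, e ≠ f →
    (Finset.univ.filter fun v => G.σ v e ≠ 0 ∧ G.σ v f ≠ 0).card ≤ 1

/-- The line-graph orientation `τ_Λ(e, ef) = τ(v, e)`, where `v` is the common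
vertex of the adjacent edges `e` and `f` (expressed as a sum over the at most
one common vertex). -/
def SOHG.lineTau (G : SOHG V E) (e f : E) : ℤ :=
  ∑ v, if G.σ v e ≠ 0 ∧ G.σ v f ≠ 0 then G.σ v e else 0

/-- The adjacency matrix of the line graph `(Λ(Γ), τ_Λ)`: the `(i,j)`-entry is
the line-graph edge sign `sgn_{Λ(τ)}(eᵢeⱼ) = -τ_Λ(eᵢ, eᵢeⱼ)·τ_Λ(eⱼ, eᵢeⱼ)` for
`i ≠ j`, and `0` on the diagonal. -/
def SOHG.lineAdj (G : SOHG V E) : Matrix E E ℤ :=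
  Matrix.of fun i j => if i = j then 0 else -(G.lineTau i j * G.lineTau j i)

/-- Let `Σ = (Γ, sgn)` be a simple signed graph and `G = (Σ,τ)` an oriented
signed graph (i.e. a `2`-uniform simple oriented hypergraph with `σ = τ`).
Then `A_{(Λ(Γ),τ_Λ)} = A_{G*}`. -/
theorem lineAdj_eq_dual_adj (G : SOHG V E) (h2 : G.TwoUniform)
    (hs : G.SimpleGraph') : G.lineAdj = G.dual.adj := by
  ext i j
  simp only [SOHG.lineAdj, SOHG.dual, SOHG.adj, SOHG.lineTau, Matrix.of_apply]
  by_cases hij : i = j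
  · simp [hij]
  · simp only [hij, if_neg, if_false]
    set S : Finset V := Finset.univ.filter fun v => G.σ v i ≠ 0 ∧ G.σ v j ≠ 0 with hS
    have hsum1 : (∑ v, if G.σ v i ≠ 0 ∧ G.σ v j ≠ 0 then G.σ v i else 0)
        = ∑ v ∈ S, G.σ v i := by
      rw [Finset.sum_filter]
    have hsum2 : (∑ v, if G.σ v j ≠ 0 ∧ G.σ v i ≠ 0 then G.σ v j else 0)
        = ∑ v ∈ S, G.σ v j := by
      rw [hS, Finset.sum_filter]
      apply Finset.sum_congr rfl
      intro v _
      by_cases h1 : G.σ v i ≠ 0 <;> by_cases h2 : G.σ v j ≠ 0 <;> simp [h1, h2, and_comm]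
    have hsum3 : (∑ v, -(G.σ v i * G.σ v j)) = ∑ v ∈ S, -(G.σ v i * G.σ v j) := by
      rw [hS, Finset.sum_filter]
      apply Finset.sum_congr rfl
      intro v _
      by_cases h1 : G.σ v i = 0
      · simp [h1]
      · by_cases h2 : G.σ v j = 0 <;> simp [h1, h2]
    rw [hsum1, hsum2, hsum3]
    have hcard : S.card ≤ 1 := hs i j hij
    rcases S.eq_empty_or_nonempty with he | ⟨v, hv⟩
    · simp [he]
    · have : S = {v} := Finset.eq_singleton_iff_unique_mem.mpr
        ⟨hv, fun w hw => Finset.card_le_one.mp hcard w hw v hv⟩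
      simp [this, mul_comm]
end

section
/- If G is an oriented hypergraph, then the (i,i)-entry of the degree matrix D_G equals the number of backsteps at v_i, namely w̃(v_i,v_i;1) - w(v_i,v_i;1), and for i ≠ j, w̃(v_i,v_j;1) - w(v_i,v_j;1) = 0. -/
open Matrix

/-- An oriented hypergraph. -/
structure OHG (V E : Type) where
  ι : V → E → ℕ
  σ : V → E → ℕ → ℤ
  σ_unit : ∀ v e k, k < ι v e → σ v e k = 1 ∨ σ v e k = -1

variable {V E : Type} [Fintype V] [Fintype E] [DecidableEq V]

/-- The degree of a vertex: the number of incidences containing it. -/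
def OHG.deg (G : OHG V E) (v : V) : ℕ := ∑ e, G.ι v e

/-- The degree matrix. -/
def OHG.degMatrix (G : OHG V E) : Matrix V V ℤ :=
  Matrix.diagonal fun v => (G.deg v : ℤ)

/-- The number of weak walks of length 1 from `i` to `j`: choices of an edge `e`
together with an incidence `(i,e,k₁)` and an incidence `(j,e,k₂)` (possibly equal). -/
def OHG.wwalk1 (G : OHG V E) (i j : V) : ℕ :=
  ∑ e, ((Finset.range (G.ι i e)) ×ˢ (Finset.range (G.ι j e))).card

/-- The number of (ordinary) walks of length 1 from `i` to `j`: as above but the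
two incidences must be distinct. -/
def OHG.walk1 (G : OHG V E) (i j : V) : ℕ :=
  ∑ e, (((Finset.range (G.ι i e)) ×ˢ (Finset.range (G.ι j e))).filter
    fun p => ¬(i = j ∧ p.1 = p.2)).card

/-- The `(i,i)`-entry of `D_G` is `w̃(vᵢ,vᵢ;1) - w(vᵢ,vᵢ;1)`, the number of
backsteps at `vᵢ`; and for `i ≠ j`, `w̃(vᵢ,vⱼ;1) - w(vᵢ,vⱼ;1) = 0`. -/
theorem degree_eq_backsteps (G : OHG V E) :
    (∀ i : V, G.degMatrix i i = (G.wwalk1 i i : ℤ) - (G.walk1 i i : ℤ)) ∧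
    (∀ i j : V, i ≠ j → (G.wwalk1 i j : ℤ) - (G.walk1 i j : ℤ) = 0) := by
  have hdiag : ∀ (n : ℕ), ((Finset.range n ×ˢ Finset.range n).filter
      fun p : ℕ × ℕ => p.1 = p.2).card = n := by
    intro n
    have him : (Finset.range n ×ˢ Finset.range n).filter (fun p : ℕ × ℕ => p.1 = p.2)
        = (Finset.range n).image (fun k => (k, k)) := by
      ext p
      simp only [Finset.mem_filter, Finset.mem_product, Finset.mem_range, Finset.mem_image]
      constructor
      · rintro ⟨⟨h1, h2⟩, h3⟩
        exact ⟨p.1, h1, by cases p; simp_all⟩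
      · rintro ⟨k, hk, rfl⟩
        exact ⟨⟨hk, hk⟩, rfl⟩
    rw [him, Finset.card_image_of_injective _ (fun a b h => by simpa using h)]
    simp
  constructor
  · intro i
    have key : ∀ e : E, ((Finset.range (G.ι i e) ×ˢ Finset.range (G.ι i e)).filter
        (fun p => ¬(i = i ∧ p.1 = p.2))).card + G.ι i e
        = (Finset.range (G.ι i e) ×ˢ Finset.range (G.ι i e)).card := by
      intro e
      classical
      have h1 : ((Finset.range (G.ι i e) ×ˢ Finset.range (G.ι i e)).filter
          (fun p => ¬(i = i ∧ p.1 = p.2)))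
          = ((Finset.range (G.ι i e) ×ˢ Finset.range (G.ι i e)).filter
          (fun p : ℕ × ℕ => ¬(p.1 = p.2))) := by
        apply Finset.filter_congr
        intro p _
        simp
      have h2 := Finset.card_filter_add_card_filter_not
        (s := Finset.range (G.ι i e) ×ˢ Finset.range (G.ι i e))
        (p := fun p : ℕ × ℕ => p.1 = p.2)
      simp only [hdiag] at h2
      rw [h1]
      omega
    simp only [OHG.degMatrix, Matrix.diagonal_apply_eq, OHG.deg, OHG.wwalk1, OHG.walk1]
    rw [eq_sub_iff_add_eq, ← Nat.cast_add, ← Finset.sum_add_distrib]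
    norm_cast
    simp only [true_and]
    refine Finset.sum_congr rfl fun e _ => ?_
    rw [add_comm]
    have := key e
    simpa using this
  · intro i j hij
    have h : ∀ e : E, ((Finset.range (G.ι i e)) ×ˢ (Finset.range (G.ι j e))).filter
        (fun p => ¬(i = j ∧ p.1 = p.2)) = (Finset.range (G.ι i e)) ×ˢ (Finset.range (G.ι j e)) := by
      intro e
      apply Finset.filter_true_of_mem
      intro p _ hp
      exact hij hp.1
    simp only [OHG.wwalk1, OHG.walk1, h, sub_self]
end

section
/- If G is an oriented hypergraph, then the (i,j)-entry of the Laplacian satisfies ℓ_ij = w̃(v_i,v_j;1) - 2·w^+(v_i,v_j;1), where w̃ counts weak walks of length 1 and w^+ counts positive walks of length 1. -/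
open Matrix

variable {V E : Type} [Fintype V] [Fintype E] [DecidableEq V]

/-- The adjacency matrix: the `(i,j)`-entry is the sum over all adjacencies
(pairs of distinct incidences `(i,e,a)`, `(j,e,b)` in a common edge `e`) of the
adjacency sign `-σ(i,e,a)σ(j,e,b)`. -/
def OHG.adj (G : OHG V E) : Matrix V V ℤ :=
  Matrix.of fun i j =>
    ∑ e, ∑ a ∈ Finset.range (G.ι i e), ∑ b ∈ Finset.range (G.ι j e),
      if ¬(i = j ∧ a = b) then -(G.σ i e a * G.σ j e b) else 0

/-- The Laplacian matrix `L_G = D_G - A_G`. -/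
def OHG.lap (G : OHG V E) : Matrix V V ℤ := G.degMatrix - G.adj

/-- The number of positive walks of length 1 from `i` to `j`: pairs of distinct
incidences in a common edge whose adjacency sign `-σ(i,e,a)σ(j,e,b)` is `+1`. -/
def OHG.wplus1 (G : OHG V E) (i j : V) : ℕ :=
  ∑ e, (((Finset.range (G.ι i e)) ×ˢ (Finset.range (G.ι j e))).filter
    fun p => ¬(i = j ∧ p.1 = p.2) ∧ -(G.σ i e p.1 * G.σ j e p.2) = 1).card

/-- The `(i,j)`-entry of the Laplacian is `w̃(vᵢ,vⱼ;1) - 2·w⁺(vᵢ,vⱼ;1)`. -/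
theorem lap_entry_eq_weakwalk (G : OHG V E) (i j : V) :
    G.lap i j = (G.wwalk1 i j : ℤ) - 2 * (G.wplus1 i j : ℤ) := by
  classical
  have key : ∀ e : E,
      (if i = j then (G.ι i e : ℤ) else 0)
        - ∑ a ∈ Finset.range (G.ι i e), ∑ b ∈ Finset.range (G.ι j e),
            (if ¬(i = j ∧ a = b) then -(G.σ i e a * G.σ j e b) else 0)
      = ((Finset.range (G.ι i e) ×ˢ Finset.range (G.ι j e)).card : ℤ)
        - 2 * ((((Finset.range (G.ι i e)) ×ˢ (Finset.range (G.ι j e))).filter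
            (fun p => ¬(i = j ∧ p.1 = p.2) ∧ -(G.σ i e p.1 * G.σ j e p.2) = 1)).card : ℤ) := by
    intro e
    have hdiag : (if i = j then (G.ι i e : ℤ) else 0)
        = ∑ a ∈ Finset.range (G.ι i e), ∑ b ∈ Finset.range (G.ι j e),
            (if i = j ∧ a = b then (1:ℤ) else 0) := by
      by_cases h : i = j
      · subst h
        have hf : Finset.filter (fun x => x < G.ι i e) (Finset.range (G.ι i e))
            = Finset.range (G.ι i e) :=
          Finset.filter_true_of_mem fun x hx => Finset.mem_range.mp hx
        simp [Finset.sum_ite_eq', Finset.mem_range, hf]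
      · simp [h]
    rw [hdiag, ← Finset.sum_sub_distrib]
    rw [Finset.card_eq_sum_ones, Finset.card_eq_sum_ones, Finset.sum_filter]
    push_cast
    rw [Finset.mul_sum, Finset.sum_product, Finset.sum_product, ← Finset.sum_sub_distrib]
    refine Finset.sum_congr rfl fun a ha => ?_
    rw [← Finset.sum_sub_distrib, ← Finset.sum_sub_distrib]
    refine Finset.sum_congr rfl fun b hb => ?_
    rcases G.σ_unit i e a (Finset.mem_range.mp ha) with h1 | h1 <;>
      rcases G.σ_unit j e b (Finset.mem_range.mp hb) with h2 | h2 <;>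
      by_cases hc : i = j ∧ a = b <;>
      simp [h1, h2, hc] <;> ring
  simp only [OHG.lap, OHG.degMatrix, OHG.adj, OHG.wwalk1, OHG.wplus1, OHG.deg,
    Matrix.sub_apply, Matrix.diagonal_apply, Matrix.of_apply]
  push_cast
  have hdeg : (if i = j then (∑ e, (G.ι i e : ℤ)) else 0)
      = ∑ e, (if i = j then (G.ι i e : ℤ) else 0) := by
    by_cases h : i = j <;> simp [h]
  rw [hdeg, Finset.mul_sum, ← Finset.sum_sub_distrib, ← Finset.sum_sub_distrib]
  exact Finset.sum_congr rfl fun e _ => key e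
end
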